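/- arXiv:2206.05733 — 3 statements merged into one kernel-verified Lean document; each statement's English description precedes it below -/
import Mathlib

section
/- Let p, n ≥ 1, let A : ℝᵖ → (n×n real matrices) and b : ℝᵖ → ℝⁿ be everywhere differentiable, and suppose there are constants C_b, C_{A'}, C_{b'}, L_{A'}, L_{b'}, c ≥ 0 such that for all θ, θ' ∈ ℝᵖ: ‖b(θ)‖ ≤ C_b; the derivatives satisfy ‖DA(θ)‖ ≤ C_{A'}, ‖Db(θ)‖ ≤ C_{b'}, ‖DA(θ) − DA(θ')‖ ≤ L_{A'}‖θ − θ'‖ and ‖Db(θ) − Db(θ')‖ ≤ L_{b'}‖θ − θ'‖ (operator norms); and A(θ) is invertible with ‖A(θ)⁻¹‖_F ≤ c. Then the map ω* : ℝᵖ → ℝⁿ defined by ω*(θ) := −A(θ)⁻¹ b(θ) is differentiable, and there exists a constant L_{ω,2} ≥ 0 (depending only on C_b, C_{A'}, C_{b'}, L_{A'}, L_{b'}, c and the dimensions) such that ‖Dω*(θ) − Dω*(θ')‖ ≤ L_{ω,2}‖θ − θ'‖ for all θ, θ'. -/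
set_option maxHeartbeats 1000000
set_option synthInstance.maxHeartbeats 200000

attribute [local instance] Matrix.frobeniusNormedAddCommGroup Matrix.frobeniusNormedSpace

noncomputable instance clmToMatSNACG {E : Type*} [SeminormedAddCommGroup E] [NormedSpace ℝ E]
    {n : ℕ} : SeminormedAddCommGroup (E →L[ℝ] Matrix (Fin n) (Fin n) ℝ) :=
  ContinuousLinearMap.toSeminormedAddCommGroup

noncomputable instance clmFromMatSNACG {F : Type*} [SeminormedAddCommGroup F] [NormedSpace ℝ F]
    {n : ℕ} : SeminormedAddCommGroup (Matrix (Fin n) (Fin n) ℝ →L[ℝ] F) :=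
  ContinuousLinearMap.toSeminormedAddCommGroup

lemma mulVec_frobenius_norm_le {n : ℕ} (M : Matrix (Fin n) (Fin n) ℝ)
    (v : EuclideanSpace ℝ (Fin n)) :
    ‖((WithLp.equiv 2 (Fin n → ℝ)).symm (M.mulVec ((WithLp.equiv 2 (Fin n → ℝ)) v)) :
        EuclideanSpace ℝ (Fin n))‖ ≤ ‖M‖ * ‖v‖ := by
  have hM : ‖M‖ = Real.sqrt (∑ i, ∑ j, (M i j) ^ 2) := by
    rw [Matrix.frobenius_norm_def, Real.sqrt_eq_rpow]
    congr 1
    simp [Real.rpow_two, Real.norm_eq_abs, sq_abs]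
  have hv : ‖v‖ = Real.sqrt (∑ j, (v j) ^ 2) := by
    rw [EuclideanSpace.norm_eq]
    simp [Real.norm_eq_abs, sq_abs]
  have key : ∑ i, (M.mulVec ((WithLp.equiv 2 (Fin n → ℝ)) v) i) ^ 2
      ≤ (∑ i, ∑ j, (M i j) ^ 2) * (∑ j, (v j) ^ 2) := by
    rw [Finset.sum_mul]
    apply Finset.sum_le_sum
    intro i _
    simpa [Matrix.mulVec, dotProduct] using
      Finset.sum_mul_sq_le_sq_mul_sq Finset.univ (fun j => M i j) (fun j => v j)
  calc ‖((WithLp.equiv 2 (Fin n → ℝ)).symm (M.mulVec ((WithLp.equiv 2 (Fin n → ℝ)) v)) :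
        EuclideanSpace ℝ (Fin n))‖
      = Real.sqrt (∑ i, (M.mulVec ((WithLp.equiv 2 (Fin n → ℝ)) v) i) ^ 2) := by
        rw [EuclideanSpace.norm_eq]
        simp [Real.norm_eq_abs, sq_abs, PiLp.toLp_apply]
    _ ≤ Real.sqrt ((∑ i, ∑ j, (M i j) ^ 2) * (∑ j, (v j) ^ 2)) := Real.sqrt_le_sqrt key
    _ = ‖M‖ * ‖v‖ := by
        rw [Real.sqrt_mul (by positivity), hM, hv]

noncomputable def mulVecCLM (n : ℕ) :
    Matrix (Fin n) (Fin n) ℝ →L[ℝ] EuclideanSpace ℝ (Fin n) →L[ℝ] EuclideanSpace ℝ (Fin n) :=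
  LinearMap.mkContinuous₂
    (LinearMap.mk₂ ℝ
      (fun M v => (WithLp.equiv 2 (Fin n → ℝ)).symm (M.mulVec ((WithLp.equiv 2 (Fin n → ℝ)) v)))
      (fun M M' v => by
        ext i
        simp [Matrix.add_mulVec, PiLp.toLp_apply, Matrix.add_apply, Pi.add_apply])
      (fun r M v => by
        ext i
        simp [Matrix.smul_mulVec, PiLp.toLp_apply])
      (fun M v v' => by
        ext i
        simp [Matrix.mulVec_add, PiLp.toLp_apply])
      (fun r M v => by
        ext i
        simp [Matrix.mulVec_smul, PiLp.toLp_apply]))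
    1 (fun M v => by simpa using mulVec_frobenius_norm_le M v)

lemma mulVecCLM_norm_le (n : ℕ) : ‖mulVecCLM n‖ ≤ 1 :=
  LinearMap.mkContinuous₂_norm_le _ zero_le_one _

lemma mulVecCLM_apply_norm_le {n : ℕ} (M : Matrix (Fin n) (Fin n) ℝ) :
    ‖mulVecCLM n M‖ ≤ ‖M‖ :=
  ContinuousLinearMap.opNorm_le_bound _ (norm_nonneg M)
    (fun v => by exact mulVec_frobenius_norm_le M v)

lemma mulVecCLM_apply {n : ℕ} (M : Matrix (Fin n) (Fin n) ℝ) (v : EuclideanSpace ℝ (Fin n)) :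
    mulVecCLM n M v
      = (WithLp.equiv 2 (Fin n → ℝ)).symm (M.mulVec ((WithLp.equiv 2 (Fin n → ℝ)) v)) := rfl

lemma clm_split (p n : ℕ)
    (B : Matrix (Fin n) (Fin n) ℝ →L[ℝ] EuclideanSpace ℝ (Fin n) →L[ℝ] EuclideanSpace ℝ (Fin n))
    (g1 g2 : Matrix (Fin n) (Fin n) ℝ)
    (b1 b2 : EuclideanSpace ℝ (Fin n))
    (db1 db2 : EuclideanSpace ℝ (Fin p) →L[ℝ] EuclideanSpace ℝ (Fin n))
    (dg1 dg2 : EuclideanSpace ℝ (Fin p) →L[ℝ] Matrix (Fin n) (Fin n) ℝ) :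
    ((B g1).comp db1 + (B.comp dg1).flip b1) - ((B g2).comp db2 + (B.comp dg2).flip b2)
      = (B g1).comp (db1 - db2) + (B (g1 - g2)).comp db2
        + ((B.comp (dg1 - dg2)).flip b1 + (B.comp dg2).flip (b1 - b2)) := by
  refine ContinuousLinearMap.ext fun x => ?_
  simp only [ContinuousLinearMap.add_apply, ContinuousLinearMap.sub_apply,
    ContinuousLinearMap.coe_comp', Function.comp_apply, ContinuousLinearMap.flip_apply,
    map_sub, ContinuousLinearMap.comp_sub, ContinuousLinearMap.sub_comp]
  abel

section ringinst
attribute [local instance] Matrix.frobeniusNormedRing Matrix.frobeniusNormedAlgebra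

lemma mulLeftRight_sub_sub {n : ℕ} (x y : Matrix (Fin n) (Fin n) ℝ) :
    ContinuousLinearMap.mulLeftRight ℝ (Matrix (Fin n) (Fin n) ℝ) x x
      - ContinuousLinearMap.mulLeftRight ℝ (Matrix (Fin n) (Fin n) ℝ) y y
    = ContinuousLinearMap.mulLeftRight ℝ (Matrix (Fin n) (Fin n) ℝ) (x - y) x
      + ContinuousLinearMap.mulLeftRight ℝ (Matrix (Fin n) (Fin n) ℝ) y (x - y) := by
  refine ContinuousLinearMap.ext fun z => ?_
  simp only [ContinuousLinearMap.sub_apply, ContinuousLinearMap.add_apply,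
    ContinuousLinearMap.mulLeftRight_apply, sub_mul, mul_sub]
  abel

end ringinst


/-- Smoothness of the optimal critic: if `θ ↦ A(θ)` (matrix-valued, Frobenius norm) and
`θ ↦ b(θ)` are differentiable with bounded, Lipschitz derivatives, `b` is bounded, and
`A(θ)` is invertible with uniformly bounded inverse, then `ω*(θ) = −A(θ)⁻¹ b(θ)` is
differentiable and has an `L_{ω,2}`-Lipschitz derivative, where the constant `L_{ω,2}`
depends only on the given constants and the dimensions. -/
theorem stmt7 (p n : ℕ) (hp : 1 ≤ p) (hn : 1 ≤ n)
    (Cb CA' Cb' LA' Lb' c : ℝ)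
    (hCb : 0 ≤ Cb) (hCA' : 0 ≤ CA') (hCb' : 0 ≤ Cb') (hLA' : 0 ≤ LA') (hLb' : 0 ≤ Lb')
    (hc : 0 ≤ c) :
    ∃ Lω2 : ℝ, 0 ≤ Lω2 ∧
      ∀ (A : EuclideanSpace ℝ (Fin p) → Matrix (Fin n) (Fin n) ℝ)
        (b : EuclideanSpace ℝ (Fin p) → EuclideanSpace ℝ (Fin n)),
        Differentiable ℝ A → Differentiable ℝ b →
        (∀ θ, ‖b θ‖ ≤ Cb) →
        (∀ θ, @norm _ ContinuousLinearMap.hasOpNorm (fderiv ℝ A θ) ≤ CA') →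
        (∀ θ, ‖fderiv ℝ b θ‖ ≤ Cb') →
        (∀ θ θ', @norm _ ContinuousLinearMap.hasOpNorm (fderiv ℝ A θ - fderiv ℝ A θ') ≤ LA' * ‖θ - θ'‖) →
        (∀ θ θ', ‖fderiv ℝ b θ - fderiv ℝ b θ'‖ ≤ Lb' * ‖θ - θ'‖) →
        (∀ θ, IsUnit (A θ)) → (∀ θ, ‖(A θ)⁻¹‖ ≤ c) →
        Differentiable ℝ
            (fun θ => (WithLp.equiv 2 (Fin n → ℝ)).symm (-((A θ)⁻¹.mulVec (b θ))) :
              EuclideanSpace ℝ (Fin p) → EuclideanSpace ℝ (Fin n)) ∧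
          ∀ θ θ' : EuclideanSpace ℝ (Fin p),
            ‖fderiv ℝ (fun θ => (WithLp.equiv 2 (Fin n → ℝ)).symm (-((A θ)⁻¹.mulVec (b θ))) :
                  EuclideanSpace ℝ (Fin p) → EuclideanSpace ℝ (Fin n)) θ -
                fderiv ℝ (fun θ => (WithLp.equiv 2 (Fin n → ℝ)).symm (-((A θ)⁻¹.mulVec (b θ))) :
                  EuclideanSpace ℝ (Fin p) → EuclideanSpace ℝ (Fin n)) θ'‖
              ≤ Lω2 * ‖θ - θ'‖ := by
  refine ⟨c * Lb' + (c * c * CA') * Cb'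
      + ((c * c * LA' + 2 * (c * c * c * CA' * CA')) * Cb + (c * c * CA') * Cb'),
    by positivity, ?_⟩
  intro A b hA hb hbB hA' hb' hALip hbLip hU hInv
  letI : NormedRing (Matrix (Fin n) (Fin n) ℝ) := Matrix.frobeniusNormedRing
  letI : NormedAlgebra ℝ (Matrix (Fin n) (Fin n) ℝ) := Matrix.frobeniusNormedAlgebra
  set g : EuclideanSpace ℝ (Fin p) → Matrix (Fin n) (Fin n) ℝ := fun θ => (A θ)⁻¹ with hgdef
  set B := mulVecCLM n with hBdef
  set Dg : EuclideanSpace ℝ (Fin p) →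
      (EuclideanSpace ℝ (Fin p) →L[ℝ] Matrix (Fin n) (Fin n) ℝ) :=
    fun θ => (-(ContinuousLinearMap.mulLeftRight ℝ _ (g θ) (g θ))).comp (fderiv ℝ A θ)
    with hDgdef
  -- derivative of the inverse map
  have hgD : ∀ θ, HasFDerivAt g (Dg θ) θ := by
    intro θ
    have hu := hU θ
    have hui : (↑hu.unit⁻¹ : Matrix (Fin n) (Fin n) ℝ) = g θ := by
      show _ = (A θ)⁻¹
      rw [Matrix.nonsing_inv_eq_ringInverse]
      conv_rhs => rw [← hu.unit_spec]
      rw [Ring.inverse_unit]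
    have h1 : HasFDerivAt Ring.inverse
        (-(ContinuousLinearMap.mulLeftRight ℝ _ (g θ) (g θ))) (A θ) := by
      have := hasFDerivAt_ringInverse (𝕜 := ℝ) hu.unit
      rwa [hu.unit_spec, hui] at this
    have h2 := h1.comp θ (hA θ).hasFDerivAt
    have hfun : (Ring.inverse ∘ A) = g := by
      funext x; simp [hgdef, Function.comp, ← Matrix.nonsing_inv_eq_ringInverse]
    rwa [hfun] at h2
  have hgdiff : Differentiable ℝ g := fun θ => (hgD θ).differentiableAt
  -- bounds
  have hgB : ∀ θ, ‖g θ‖ ≤ c := hInv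
  have hDgB : ∀ θ, ‖Dg θ‖ ≤ c * c * CA' := by
    intro θ
    refine (ContinuousLinearMap.opNorm_comp_le _ _).trans ?_
    rw [norm_neg]
    exact mul_le_mul
      ((ContinuousLinearMap.opNorm_mulLeftRight_apply_apply_le ℝ _ _ _).trans
        (mul_le_mul (hgB θ) (hgB θ) (norm_nonneg _) hc))
      (hA' θ) (norm_nonneg _) (by positivity)
  -- Lipschitz bounds for g and b
  have hgLip : ∀ θ θ', ‖g θ - g θ'‖ ≤ (c * c * CA') * ‖θ - θ'‖ := by
    intro θ θ'
    have := Convex.norm_image_sub_le_of_norm_fderiv_le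
      (f := g) (C := c * c * CA') (s := Set.univ)
      (fun x _ => (hgD x).differentiableAt)
      (fun x _ => by have h := hDgB x; rw [← (hgD x).fderiv] at h; exact h)
      convex_univ (Set.mem_univ θ') (Set.mem_univ θ)
    simpa using this
  have hbLipF : ∀ θ θ', ‖b θ - b θ'‖ ≤ Cb' * ‖θ - θ'‖ := by
    intro θ θ'
    have := Convex.norm_image_sub_le_of_norm_fderiv_le
      (f := b) (C := Cb') (s := Set.univ)
      (fun x _ => (hb x))
      (fun x _ => hb' x)
      convex_univ (Set.mem_univ θ') (Set.mem_univ θ)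
    simpa using this
  -- Lipschitz bound for Dg
  have hDgLip : ∀ θ θ',
      ‖Dg θ - Dg θ'‖ ≤ (c * c * LA' + 2 * (c * c * c * CA' * CA')) * ‖θ - θ'‖ := by
    intro θ θ'
    set Mθ := ContinuousLinearMap.mulLeftRight ℝ (Matrix (Fin n) (Fin n) ℝ) (g θ) (g θ)
    set Mθ' := ContinuousLinearMap.mulLeftRight ℝ (Matrix (Fin n) (Fin n) ℝ) (g θ') (g θ')
    have hsplit : Dg θ - Dg θ'
        = (-Mθ).comp (fderiv ℝ A θ - fderiv ℝ A θ') + ((-Mθ) - (-Mθ')).comp (fderiv ℝ A θ') := by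
      have key : ∀ (f g : Matrix (Fin n) (Fin n) ℝ →L[ℝ] Matrix (Fin n) (Fin n) ℝ)
          (a b : EuclideanSpace ℝ (Fin p) →L[ℝ] Matrix (Fin n) (Fin n) ℝ),
          f.comp a - g.comp b = f.comp (a - b) + (f - g).comp b := by
        intro f g a b
        rw [ContinuousLinearMap.comp_sub, ContinuousLinearMap.sub_comp]
        abel
      exact key _ _ _ _
    have hMdiff : ‖Mθ - Mθ'‖ ≤ 2 * c * ((c * c * CA') * ‖θ - θ'‖) := by
      have hid : Mθ - Mθ'
          = ContinuousLinearMap.mulLeftRight ℝ _ (g θ - g θ') (g θ)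
            + ContinuousLinearMap.mulLeftRight ℝ _ (g θ') (g θ - g θ') :=
        mulLeftRight_sub_sub (g θ) (g θ')
      rw [hid]
      refine (norm_add_le _ _).trans ?_
      have h1 := ContinuousLinearMap.opNorm_mulLeftRight_apply_apply_le ℝ
        (Matrix (Fin n) (Fin n) ℝ) (g θ - g θ') (g θ)
      have h2 := ContinuousLinearMap.opNorm_mulLeftRight_apply_apply_le ℝ
        (Matrix (Fin n) (Fin n) ℝ) (g θ') (g θ - g θ')
      have e1 : ‖g θ - g θ'‖ * ‖g θ‖ ≤ ((c * c * CA') * ‖θ - θ'‖) * c :=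
        mul_le_mul (hgLip θ θ') (hgB θ) (norm_nonneg _) (by positivity)
      have e2 : ‖g θ'‖ * ‖g θ - g θ'‖ ≤ c * ((c * c * CA') * ‖θ - θ'‖) :=
        mul_le_mul (hgB θ') (hgLip θ θ') (norm_nonneg _) hc
      nlinarith [norm_nonneg (g θ - g θ'), norm_nonneg (θ - θ')]
    rw [hsplit]
    refine (norm_add_le _ _).trans ?_
    have t1 : ‖(-Mθ).comp (fderiv ℝ A θ - fderiv ℝ A θ')‖ ≤ (c * c) * (LA' * ‖θ - θ'‖) := by
      refine (ContinuousLinearMap.opNorm_comp_le _ _).trans ?_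
      rw [norm_neg]
      exact mul_le_mul
        ((ContinuousLinearMap.opNorm_mulLeftRight_apply_apply_le ℝ _ _ _).trans
          (mul_le_mul (hgB θ) (hgB θ) (norm_nonneg _) hc))
        (hALip θ θ') (norm_nonneg _) (by positivity)
    have t2 : ‖((-Mθ) - (-Mθ')).comp (fderiv ℝ A θ')‖
        ≤ (2 * c * ((c * c * CA') * ‖θ - θ'‖)) * CA' := by
      refine (ContinuousLinearMap.opNorm_comp_le _ _).trans ?_
      have : ‖(-Mθ) - (-Mθ')‖ = ‖Mθ - Mθ'‖ := by
        rw [show (-Mθ) - (-Mθ') = -(Mθ - Mθ') by abel, norm_neg]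
      rw [this]
      exact mul_le_mul hMdiff (hA' θ') (norm_nonneg _) (by positivity)
    refine (add_le_add t1 t2).trans (le_of_eq ?_)
    ring
  -- the function and its derivative
  have hfun : (fun θ => (WithLp.equiv 2 (Fin n → ℝ)).symm (-((A θ)⁻¹.mulVec (b θ))) :
      EuclideanSpace ℝ (Fin p) → EuclideanSpace ℝ (Fin n))
      = fun θ => -(B (g θ) (b θ)) := by
    funext θ
    rw [hBdef, mulVecCLM_apply, WithLp.equiv_symm_apply, WithLp.toLp_neg]
    rfl
  have hFD : ∀ θ, HasFDerivAt (fun θ => -(B (g θ) (b θ)))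
      (-((B (g θ)).comp (fderiv ℝ b θ) + (B.comp (Dg θ)).flip (b θ))) θ := by
    intro θ
    have h1 : HasFDerivAt (fun y => B (g y)) (B.comp (Dg θ)) θ :=
      (B.hasFDerivAt).comp θ (hgD θ)
    exact (h1.clm_apply (hb θ).hasFDerivAt).neg
  rw [hfun]
  refine ⟨fun θ => (hFD θ).differentiableAt, ?_⟩
  intro θ θ'
  rw [(hFD θ).fderiv, (hFD θ').fderiv, neg_sub_neg, norm_sub_rev]
  -- decompose into four terms
  have hsplit : ((B (g θ)).comp (fderiv ℝ b θ) + (B.comp (Dg θ)).flip (b θ))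
        - ((B (g θ')).comp (fderiv ℝ b θ') + (B.comp (Dg θ')).flip (b θ'))
      = (B (g θ)).comp (fderiv ℝ b θ - fderiv ℝ b θ')
        + (B (g θ - g θ')).comp (fderiv ℝ b θ')
        + ((B.comp (Dg θ - Dg θ')).flip (b θ)
        + (B.comp (Dg θ')).flip (b θ - b θ')) :=
    clm_split p n B (g θ) (g θ') (b θ) (b θ') (fderiv ℝ b θ) (fderiv ℝ b θ') (Dg θ) (Dg θ')
  rw [hsplit]
  have e1 : ‖(B (g θ)).comp (fderiv ℝ b θ - fderiv ℝ b θ')‖ ≤ c * (Lb' * ‖θ - θ'‖) :=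
    (ContinuousLinearMap.opNorm_comp_le _ _).trans
      (mul_le_mul ((mulVecCLM_apply_norm_le _).trans (hgB θ)) (hbLip θ θ')
        (norm_nonneg _) hc)
  have e2 : ‖(B (g θ - g θ')).comp (fderiv ℝ b θ')‖ ≤ ((c * c * CA') * ‖θ - θ'‖) * Cb' :=
    (ContinuousLinearMap.opNorm_comp_le _ _).trans
      (mul_le_mul ((mulVecCLM_apply_norm_le _).trans (hgLip θ θ')) (hb' θ')
        (norm_nonneg _) (by positivity))
  have e3 : ‖(B.comp (Dg θ - Dg θ')).flip (b θ)‖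
      ≤ ((c * c * LA' + 2 * (c * c * c * CA' * CA')) * ‖θ - θ'‖) * Cb := by
    refine (ContinuousLinearMap.le_opNorm _ _).trans ?_
    rw [ContinuousLinearMap.opNorm_flip]
    refine mul_le_mul ?_ (hbB θ) (norm_nonneg _) (by positivity)
    refine (ContinuousLinearMap.opNorm_comp_le _ _).trans ?_
    calc ‖B‖ * ‖Dg θ - Dg θ'‖ ≤ 1 * ((c * c * LA' + 2 * (c * c * c * CA' * CA')) * ‖θ - θ'‖) :=
          mul_le_mul (mulVecCLM_norm_le n) (hDgLip θ θ') (norm_nonneg _) zero_le_one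
      _ = (c * c * LA' + 2 * (c * c * c * CA' * CA')) * ‖θ - θ'‖ := one_mul _
  have e4 : ‖(B.comp (Dg θ')).flip (b θ - b θ')‖ ≤ (c * c * CA') * (Cb' * ‖θ - θ'‖) := by
    refine (ContinuousLinearMap.le_opNorm _ _).trans ?_
    rw [ContinuousLinearMap.opNorm_flip]
    refine mul_le_mul ?_ (hbLipF θ θ') (norm_nonneg _) (by positivity)
    refine (ContinuousLinearMap.opNorm_comp_le _ _).trans ?_
    calc ‖B‖ * ‖Dg θ'‖ ≤ 1 * (c * c * CA') :=
          mul_le_mul (mulVecCLM_norm_le n) (hDgB θ') (norm_nonneg _) (by positivity)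
      _ = c * c * CA' := one_mul _
  calc ‖(B (g θ)).comp (fderiv ℝ b θ - fderiv ℝ b θ')
        + (B (g θ - g θ')).comp (fderiv ℝ b θ')
        + ((B.comp (Dg θ - Dg θ')).flip (b θ)
        + (B.comp (Dg θ')).flip (b θ - b θ'))‖
      ≤ ‖(B (g θ)).comp (fderiv ℝ b θ - fderiv ℝ b θ')
        + (B (g θ - g θ')).comp (fderiv ℝ b θ')‖
        + ‖(B.comp (Dg θ - Dg θ')).flip (b θ)
        + (B.comp (Dg θ')).flip (b θ - b θ')‖ := norm_add_le _ _
    _ ≤ (‖(B (g θ)).comp (fderiv ℝ b θ - fderiv ℝ b θ')‖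
        + ‖(B (g θ - g θ')).comp (fderiv ℝ b θ')‖)
        + (‖(B.comp (Dg θ - Dg θ')).flip (b θ)‖
        + ‖(B.comp (Dg θ')).flip (b θ - b θ')‖) :=
        add_le_add (norm_add_le _ _) (norm_add_le _ _)
    _ ≤ (c * (Lb' * ‖θ - θ'‖) + ((c * c * CA') * ‖θ - θ'‖) * Cb')
        + (((c * c * LA' + 2 * (c * c * c * CA' * CA')) * ‖θ - θ'‖) * Cb
          + (c * c * CA') * (Cb' * ‖θ - θ'‖)) :=
        add_le_add (add_le_add e1 e2) (add_le_add e3 e4)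
    _ = (c * Lb' + (c * c * CA') * Cb'
        + ((c * c * LA' + 2 * (c * c * c * CA' * CA')) * Cb + (c * c * CA') * Cb'))
        * ‖θ - θ'‖ := by ring
end

section
/- Let N, d, K_c ≥ 1 be integers, C > 0, ν ∈ (0,1). Let W be an N×N doubly stochastic real matrix (every row and every column sums to 1) such that ‖W·M‖_F ≤ ν‖M‖_F for every N×d real matrix M each of whose columns sums to zero, and set Q := I_N − (1/N)𝟏𝟏ᵀ, where 𝟏 ∈ ℝᴺ is the all-ones vector. Let (β_k)_{k≥0} be nonnegative reals and let (ω_k), (G_k), (E_k) be N×d real matrices satisfying ω_{k+1} = Wω_k − β_k G_k + E_k whenever K_c divides k, and ω_{k+1} = ω_k − β_k G_k + E_k otherwise, where every row of every G_k has Euclidean norm at most C and every row of E_k has Euclidean norm at most β_k C. Then for every k ≥ 1, ‖Qω_k‖_F ≤ ν^{k/K_c − 1}‖ω_0‖_F + 4√N C Σ_{t=0}^{k} β_t ν^{(k−t)/K_c − 1}, where ν raised to a real exponent denotes the real power. -/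
/-- The Frobenius norm of a real matrix. -/
noncomputable def frob {m n : Type*} [Fintype m] [Fintype n] (M : Matrix m n ℝ) : ℝ :=
  Real.sqrt (∑ i, ∑ j, (M i j) ^ 2)

private lemma frob_eq_norm {m n : Type*} [Fintype m] [Fintype n] (M : Matrix m n ℝ) :
    frob M = ‖(WithLp.equiv 2 (m × n → ℝ)).symm (fun p => M p.1 p.2)‖ := by
  rw [EuclideanSpace.norm_eq, frob, Fintype.sum_prod_type]
  simp [Real.norm_eq_abs, sq_abs]

private lemma frob_nonneg {m n : Type*} [Fintype m] [Fintype n] (M : Matrix m n ℝ) :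
    0 ≤ frob M := Real.sqrt_nonneg _

private lemma frob_add_le {m n : Type*} [Fintype m] [Fintype n] (A B : Matrix m n ℝ) :
    frob (A + B) ≤ frob A + frob B := by
  rw [frob_eq_norm, frob_eq_norm, frob_eq_norm]
  exact norm_add_le ((WithLp.equiv 2 (m × n → ℝ)).symm fun p => A p.1 p.2)
    ((WithLp.equiv 2 (m × n → ℝ)).symm fun p => B p.1 p.2)

private lemma frob_neg {m n : Type*} [Fintype m] [Fintype n] (A : Matrix m n ℝ) :
    frob (-A) = frob A := by simp [frob]

private lemma frob_sub_le {m n : Type*} [Fintype m] [Fintype n] (A B : Matrix m n ℝ) :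
    frob (A - B) ≤ frob A + frob B := by
  rw [sub_eq_add_neg]
  calc frob (A + -B) ≤ frob A + frob (-B) := frob_add_le A (-B)
    _ = frob A + frob B := by rw [frob_neg]

private lemma frob_smul {m n : Type*} [Fintype m] [Fintype n] (c : ℝ) (hc : 0 ≤ c)
    (A : Matrix m n ℝ) : frob (c • A) = c * frob A := by
  have h : ∀ i j, ((c • A) i j) ^ 2 = c ^ 2 * (A i j) ^ 2 := by
    intro i j; simp [Matrix.smul_apply, smul_eq_mul]; ring
  simp only [frob, h, ← Finset.mul_sum]
  rw [Real.sqrt_mul (sq_nonneg c), Real.sqrt_sq hc]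

private lemma frob_le_of_rows {N d : ℕ} (M : Matrix (Fin N) (Fin d) ℝ) {B : ℝ} (hB : 0 ≤ B)
    (h : ∀ i, Real.sqrt (∑ j, (M i j) ^ 2) ≤ B) : frob M ≤ Real.sqrt N * B := by
  rw [frob, ← Real.sqrt_sq hB, ← Real.sqrt_mul (Nat.cast_nonneg N)]
  apply Real.sqrt_le_sqrt
  calc ∑ i, ∑ j, (M i j) ^ 2 ≤ ∑ _i : Fin N, B ^ 2 := by
        refine Finset.sum_le_sum fun i _ => ?_
        have h0 : (0:ℝ) ≤ ∑ j, (M i j) ^ 2 := Finset.sum_nonneg fun _ _ => sq_nonneg _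
        calc ∑ j, (M i j) ^ 2 = Real.sqrt (∑ j, (M i j) ^ 2) ^ 2 := (Real.sq_sqrt h0).symm
          _ ≤ B ^ 2 := pow_le_pow_left₀ (Real.sqrt_nonneg _) (h i) 2
    _ = (N : ℝ) * B ^ 2 := by simp [Finset.sum_const, Finset.card_univ, nsmul_eq_mul]

private def ccount (Kc k : ℕ) : ℕ := (k + Kc - 1) / Kc

private lemma ccount_zero {Kc : ℕ} (hKc : 1 ≤ Kc) : ccount Kc 0 = 0 := by
  unfold ccount
  exact Nat.div_eq_of_lt (by omega)

private lemma ccount_succ {Kc : ℕ} (hKc : 1 ≤ Kc) (k : ℕ) :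
    ccount Kc (k + 1) = ccount Kc k + if Kc ∣ k then 1 else 0 := by
  unfold ccount
  have h1 : k + 1 + Kc - 1 = (k + Kc - 1) + 1 := by omega
  rw [h1, Nat.succ_div]
  congr 1
  have h2 : k + Kc - 1 + 1 = k + Kc := by omega
  rw [h2]
  simp [Nat.dvd_add_self_right]

private lemma ccount_succ' {Kc : ℕ} (hKc : 1 ≤ Kc) (t : ℕ) :
    ccount Kc (t + 1) = t / Kc + 1 := by
  unfold ccount
  have h1 : t + 1 + Kc - 1 = t + Kc := by omega
  rw [h1, Nat.add_div_right _ hKc]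

private lemma ccount_le {Kc : ℕ} (hKc : 1 ≤ Kc) (k : ℕ) : k ≤ Kc * ccount Kc k := by
  have h1 := Nat.div_add_mod (k + Kc - 1) Kc
  have h2 : (k + Kc - 1) % Kc < Kc := Nat.mod_lt _ hKc
  unfold ccount
  omega

/-- Consensus error bound for the decentralized iterates with consensus period `K_c`:
if `W` is doubly stochastic and contracts mean-zero matrices by `ν < 1`, and the iterates
satisfy `ω_{k+1} = Wω_k − β_k G_k + E_k` when `K_c ∣ k` and `ω_{k+1} = ω_k − β_k G_k + E_k`
otherwise, with rows of `G_k` bounded by `C` and rows of `E_k` bounded by `β_k C`, then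
`‖Qω_k‖_F ≤ ν^{k/K_c − 1}‖ω_0‖_F + 4√N C Σ_{t=0}^{k} β_t ν^{(k−t)/K_c − 1}`. -/
theorem stmt8 (N d Kc : ℕ) (hN : 1 ≤ N) (hd : 1 ≤ d) (hKc : 1 ≤ Kc)
    (C : ℝ) (hC : 0 < C) (ν : ℝ) (hν0 : 0 < ν) (hν1 : ν < 1)
    (W : Matrix (Fin N) (Fin N) ℝ)
    (hrow : ∀ i, ∑ j, W i j = 1) (hcol : ∀ j, ∑ i, W i j = 1)
    (hcontract : ∀ M : Matrix (Fin N) (Fin d) ℝ,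
      (∀ j, ∑ i, M i j = 0) → frob (W * M) ≤ ν * frob M)
    (β : ℕ → ℝ) (hβ : ∀ k, 0 ≤ β k)
    (ω G E : ℕ → Matrix (Fin N) (Fin d) ℝ)
    (hrec₁ : ∀ k, Kc ∣ k → ω (k + 1) = W * ω k - β k • G k + E k)
    (hrec₂ : ∀ k, ¬ Kc ∣ k → ω (k + 1) = ω k - β k • G k + E k)
    (hG : ∀ k i, Real.sqrt (∑ j, (G k i j) ^ 2) ≤ C)
    (hE : ∀ k i, Real.sqrt (∑ j, (E k i j) ^ 2) ≤ β k * C) :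
    ∀ k : ℕ, 1 ≤ k →
      frob (((1 : Matrix (Fin N) (Fin N) ℝ) -
            (N : ℝ)⁻¹ • Matrix.vecMulVec (fun _ => (1 : ℝ)) (fun _ => (1 : ℝ))) * ω k)
        ≤ ν ^ ((k : ℝ) / (Kc : ℝ) - 1) * frob (ω 0) +
          4 * Real.sqrt N * C *
            ∑ t ∈ Finset.range (k + 1), β t * ν ^ (((k : ℝ) - (t : ℝ)) / (Kc : ℝ) - 1) := by
  have hNne : (N:ℝ) ≠ 0 := Nat.cast_ne_zero.2 (by omega)
  set Qm : Matrix (Fin N) (Fin N) ℝ := (1 : Matrix (Fin N) (Fin N) ℝ) -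
      (N : ℝ)⁻¹ • Matrix.vecMulVec (fun _ => (1 : ℝ)) (fun _ => (1 : ℝ)) with hQm
  -- entry formula
  have happ : ∀ (M : Matrix (Fin N) (Fin d) ℝ) (i : Fin N) (j : Fin d),
      (Qm * M) i j = M i j - (N : ℝ)⁻¹ * ∑ l, M l j := by
    intro M i j
    rw [hQm, Matrix.sub_mul, Matrix.smul_mul, Matrix.one_mul, Matrix.sub_apply,
      Matrix.smul_apply]
    simp [Matrix.mul_apply, Matrix.vecMulVec_apply]
  -- columns of Qm * M sum to zero
  have hzero : ∀ (M : Matrix (Fin N) (Fin d) ℝ) (j : Fin d), ∑ i, (Qm * M) i j = 0 := by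
    intro M j
    simp only [happ]
    rw [Finset.sum_sub_distrib, Finset.sum_const, Finset.card_univ, Fintype.card_fin,
      nsmul_eq_mul]
    field_simp
    ring
  -- Qm is nonexpansive in Frobenius norm
  have hQle : ∀ M : Matrix (Fin N) (Fin d) ℝ, frob (Qm * M) ≤ frob M := by
    intro M
    apply Real.sqrt_le_sqrt
    rw [Finset.sum_comm, Finset.sum_comm (s := (Finset.univ : Finset (Fin N)))]
    refine Finset.sum_le_sum fun j _ => ?_
    simp only [happ]
    set s := ∑ l, M l j with hs
    have hexp : ∀ x c : ℝ, (x - c)^2 = x^2 - 2*c*x + c^2 := fun x c => by ring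
    simp only [hexp]
    rw [Finset.sum_add_distrib, Finset.sum_sub_distrib, ← Finset.mul_sum, Finset.sum_const,
      Finset.card_univ, Fintype.card_fin, nsmul_eq_mul, ← hs]
    have key : (N:ℝ) * ((N:ℝ)⁻¹ * s)^2 = (N:ℝ)⁻¹ * s^2 := by field_simp
    rw [key]
    have hpos : 0 ≤ (N:ℝ)⁻¹ * s^2 := by positivity
    nlinarith
  -- Qm commutes with W
  have hcomm : ∀ M : Matrix (Fin N) (Fin d) ℝ, Qm * (W * M) = W * (Qm * M) := by
    intro M
    rw [← Matrix.mul_assoc, ← Matrix.mul_assoc]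
    congr 1
    have hJW : Matrix.vecMulVec (fun _ : Fin N => (1:ℝ)) (fun _ : Fin N => (1:ℝ)) * W
        = Matrix.vecMulVec (fun _ : Fin N => (1:ℝ)) (fun _ : Fin N => (1:ℝ)) := by
      ext i j; simp [Matrix.mul_apply, Matrix.vecMulVec_apply, hcol j]
    have hWJ : W * Matrix.vecMulVec (fun _ : Fin N => (1:ℝ)) (fun _ : Fin N => (1:ℝ))
        = Matrix.vecMulVec (fun _ : Fin N => (1:ℝ)) (fun _ : Fin N => (1:ℝ)) := by
      ext i j; simp [Matrix.mul_apply, Matrix.vecMulVec_apply, hrow i]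
    rw [hQm, Matrix.sub_mul, Matrix.mul_sub, Matrix.smul_mul, Matrix.mul_smul, Matrix.one_mul,
      Matrix.mul_one, hJW, hWJ]
  -- frobenius bounds on G and E
  have hGfrob : ∀ k, frob (G k) ≤ Real.sqrt N * C := fun k => frob_le_of_rows _ hC.le (hG k)
  have hEfrob : ∀ k, frob (E k) ≤ Real.sqrt N * (β k * C) :=
    fun k => frob_le_of_rows _ (mul_nonneg (hβ k) hC.le) (hE k)
  set D : ℝ := 2 * Real.sqrt N * C with hD
  have hsqrtN : 0 < Real.sqrt N := Real.sqrt_pos.2 (by positivity)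
  have hDpos : 0 < D := by positivity
  -- one-step bound
  have hstep : ∀ k, frob (Qm * ω (k+1)) ≤
      (if Kc ∣ k then ν else 1) * frob (Qm * ω k) + D * β k := by
    intro k
    have hQG : frob (Qm * G k) ≤ Real.sqrt N * C := le_trans (hQle _) (hGfrob k)
    have hQE : frob (Qm * E k) ≤ Real.sqrt N * (β k * C) := le_trans (hQle _) (hEfrob k)
    by_cases hdvd : Kc ∣ k
    · rw [if_pos hdvd, hrec₁ k hdvd]
      have heq : Qm * (W * ω k - β k • G k + E k)
          = (W * (Qm * ω k) - β k • (Qm * G k)) + Qm * E k := by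
        rw [Matrix.mul_add, Matrix.mul_sub, Matrix.mul_smul, hcomm]
      rw [heq]
      have h1 : frob (W * (Qm * ω k)) ≤ ν * frob (Qm * ω k) :=
        hcontract _ (hzero (ω k))
      have h2 : frob (β k • (Qm * G k)) ≤ β k * (Real.sqrt N * C) := by
        rw [frob_smul _ (hβ k)]
        exact mul_le_mul_of_nonneg_left hQG (hβ k)
      calc frob ((W * (Qm * ω k) - β k • (Qm * G k)) + Qm * E k)
          ≤ frob (W * (Qm * ω k) - β k • (Qm * G k)) + frob (Qm * E k) := frob_add_le _ _
        _ ≤ (frob (W * (Qm * ω k)) + frob (β k • (Qm * G k))) + frob (Qm * E k) := by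
            gcongr; exact frob_sub_le _ _
        _ ≤ ν * frob (Qm * ω k) + D * β k := by
            rw [hD]; nlinarith [hQE, h1, h2]
    · rw [if_neg hdvd, hrec₂ k hdvd, one_mul]
      have heq : Qm * (ω k - β k • G k + E k)
          = (Qm * ω k - β k • (Qm * G k)) + Qm * E k := by
        rw [Matrix.mul_add, Matrix.mul_sub, Matrix.mul_smul]
      rw [heq]
      have h2 : frob (β k • (Qm * G k)) ≤ β k * (Real.sqrt N * C) := by
        rw [frob_smul _ (hβ k)]
        exact mul_le_mul_of_nonneg_left hQG (hβ k)
      calc frob ((Qm * ω k - β k • (Qm * G k)) + Qm * E k)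
          ≤ frob (Qm * ω k - β k • (Qm * G k)) + frob (Qm * E k) := frob_add_le _ _
        _ ≤ (frob (Qm * ω k) + frob (β k • (Qm * G k))) + frob (Qm * E k) := by
            gcongr; exact frob_sub_le _ _
        _ ≤ frob (Qm * ω k) + D * β k := by
            rw [hD]; nlinarith [hQE, h2]
  set A : ℝ := frob (ω 0) with hA
  have hApos : 0 ≤ A := frob_nonneg _
  set c : ℕ → ℕ := ccount Kc with hc
  -- main induction
  have hP : ∀ k, frob (Qm * ω k) ≤ ν ^ (c k) * A +
      D * ∑ t ∈ Finset.range k, β t * (ν ^ (c k) / ν ^ (c (t+1))) := by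
    intro k
    induction k with
    | zero =>
      rw [hc, ccount_zero hKc]
      simpa using hQle (ω 0)
    | succ k ih =>
      have hs := hstep k
      have hνne : ∀ n : ℕ, (ν:ℝ) ^ n ≠ 0 := fun n => pow_ne_zero n (ne_of_gt hν0)
      by_cases hdvd : Kc ∣ k
      · rw [if_pos hdvd] at hs
        have hcs : c (k+1) = c k + 1 := by rw [hc, ccount_succ hKc, if_pos hdvd]
        calc frob (Qm * ω (k+1)) ≤ ν * frob (Qm * ω k) + D * β k := hs
          _ ≤ ν * (ν ^ (c k) * A +
              D * ∑ t ∈ Finset.range k, β t * (ν ^ (c k) / ν ^ (c (t+1)))) + D * β k := by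
              gcongr
          _ = ν ^ (c (k+1)) * A +
              D * ∑ t ∈ Finset.range (k+1), β t * (ν ^ (c (k+1)) / ν ^ (c (t+1))) := by
              have hsum : ∑ t ∈ Finset.range (k+1), β t * (ν ^ (c (k+1)) / ν ^ (c (t+1)))
                  = ν * (∑ t ∈ Finset.range k, β t * (ν ^ (c k) / ν ^ (c (t+1)))) + β k := by
                rw [Finset.sum_range_succ, Finset.mul_sum]
                congr 1
                · exact Finset.sum_congr rfl fun t _ => by rw [hcs, pow_succ]; ring
                · rw [div_self (hνne (c (k+1))), mul_one]
              rw [hsum, hcs, pow_succ]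
              ring
      · rw [if_neg hdvd, one_mul] at hs
        have hcs : c (k+1) = c k := by rw [hc, ccount_succ hKc, if_neg hdvd]; rfl
        calc frob (Qm * ω (k+1)) ≤ frob (Qm * ω k) + D * β k := hs
          _ ≤ (ν ^ (c k) * A +
              D * ∑ t ∈ Finset.range k, β t * (ν ^ (c k) / ν ^ (c (t+1)))) + D * β k := by
              gcongr
          _ = ν ^ (c (k+1)) * A +
              D * ∑ t ∈ Finset.range (k+1), β t * (ν ^ (c (k+1)) / ν ^ (c (t+1))) := by
              have hsum : ∑ t ∈ Finset.range (k+1), β t * (ν ^ (c (k+1)) / ν ^ (c (t+1)))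
                  = (∑ t ∈ Finset.range k, β t * (ν ^ (c k) / ν ^ (c (t+1)))) + β k := by
                rw [Finset.sum_range_succ]
                congr 1
                · exact Finset.sum_congr rfl fun t _ => by rw [hcs]
                · rw [div_self (hνne (c (k+1))), mul_one]
              rw [hsum, hcs]
              ring
  -- convert to real exponents
  intro k hk1
  have hKcR : (0:ℝ) < (Kc:ℝ) := by positivity
  have hckR : ∀ m : ℕ, (m:ℝ) ≤ (Kc:ℝ) * (c m : ℝ) := by
    intro m
    have := ccount_le hKc m
    exact_mod_cast this
  -- exponent bound for the leading term
  have hlead : ν ^ (c k) ≤ ν ^ ((k : ℝ) / (Kc : ℝ) - 1) := by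
    rw [← Real.rpow_natCast ν (c k)]
    apply Real.rpow_le_rpow_of_exponent_ge hν0 hν1.le
    have h1 : (k:ℝ) / Kc ≤ (c k : ℝ) := by
      rw [div_le_iff₀ hKcR]
      nlinarith [hckR k]
    linarith
  -- per-term exponent bound
  have hterm : ∀ t, ν ^ (c k) / ν ^ (c (t+1)) ≤ ν ^ (((k:ℝ) - t) / Kc - 1) := by
    intro t
    have hq : c (t+1) = t / Kc + 1 := by rw [hc, ccount_succ' hKc]
    have hqt : (Kc:ℝ) * ((t / Kc : ℕ) : ℝ) ≤ (t:ℝ) := by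
      have := Nat.div_mul_le_self t Kc
      have h2 : Kc * (t / Kc) ≤ t := by rw [mul_comm]; exact this
      exact_mod_cast h2
    rw [← Real.rpow_natCast ν (c k), ← Real.rpow_natCast ν (c (t+1)), ← Real.rpow_sub hν0]
    apply Real.rpow_le_rpow_of_exponent_ge hν0 hν1.le
    rw [hq]
    push_cast
    have h1 : ((k:ℝ) - t) / Kc ≤ (c k : ℝ) - ((t / Kc : ℕ) : ℝ) := by
      rw [div_le_iff₀ hKcR]
      nlinarith [hckR k, hqt]
    linarith
  -- assemble
  have hfinal := hP k
  have hsum1 : ∑ t ∈ Finset.range k, β t * (ν ^ (c k) / ν ^ (c (t+1)))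
      ≤ ∑ t ∈ Finset.range k, β t * ν ^ (((k:ℝ) - t) / Kc - 1) :=
    Finset.sum_le_sum fun t _ => mul_le_mul_of_nonneg_left (hterm t) (hβ t)
  have hsum2 : ∑ t ∈ Finset.range k, β t * ν ^ (((k:ℝ) - t) / Kc - 1)
      ≤ ∑ t ∈ Finset.range (k+1), β t * ν ^ (((k:ℝ) - t) / Kc - 1) := by
    rw [Finset.sum_range_succ]
    have : 0 ≤ β k * ν ^ (((k:ℝ) - k) / Kc - 1) :=
      mul_nonneg (hβ k) (Real.rpow_nonneg hν0.le _)
    linarith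
  have hsumnn : 0 ≤ ∑ t ∈ Finset.range (k+1), β t * ν ^ (((k:ℝ) - t) / Kc - 1) :=
    Finset.sum_nonneg fun t _ => mul_nonneg (hβ t) (Real.rpow_nonneg hν0.le _)
  have hchain : D * ∑ t ∈ Finset.range k, β t * (ν ^ (c k) / ν ^ (c (t+1)))
      ≤ 4 * Real.sqrt N * C * ∑ t ∈ Finset.range (k+1), β t * ν ^ (((k:ℝ) - t) / Kc - 1) := by
    calc D * ∑ t ∈ Finset.range k, β t * (ν ^ (c k) / ν ^ (c (t+1)))
        ≤ D * ∑ t ∈ Finset.range (k+1), β t * ν ^ (((k:ℝ) - t) / Kc - 1) := by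
          apply mul_le_mul_of_nonneg_left (le_trans hsum1 hsum2) hDpos.le
      _ ≤ 4 * Real.sqrt N * C * ∑ t ∈ Finset.range (k+1), β t * ν ^ (((k:ℝ) - t) / Kc - 1) := by
          apply mul_le_mul_of_nonneg_right _ hsumnn
          rw [hD]; nlinarith [hsqrtN, hC]
  have hlead' : ν ^ (c k) * A ≤ ν ^ ((k : ℝ) / (Kc : ℝ) - 1) * A :=
    mul_le_mul_of_nonneg_right hlead hApos
  calc frob (Qm * ω k) ≤ ν ^ (c k) * A +
        D * ∑ t ∈ Finset.range k, β t * (ν ^ (c k) / ν ^ (c (t+1))) := hfinal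
    _ ≤ ν ^ ((k : ℝ) / (Kc : ℝ) - 1) * A +
        4 * Real.sqrt N * C * ∑ t ∈ Finset.range (k+1), β t * ν ^ (((k:ℝ) - t) / Kc - 1) := by
        linarith
end

section
/- Let n ≥ 1, let A be an n×n real symmetric matrix, and let λ, L > 0 satisfy λ‖x‖² ≤ ⟪x, Ax⟫ ≤ L‖x‖² for all x ∈ ℝⁿ. Let b, h* ∈ ℝⁿ with A h* = b, and let 0 < ρ ≤ 1/(2L). Then for all h, g ∈ ℝⁿ: ‖h − ρg − h*‖² ≤ (1 − ρλ/2)‖h − h*‖² + (2ρ/λ + 2ρ²)‖g − (Ah − b)‖². -/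
open scoped InnerProductSpace

set_option maxHeartbeats 1000000 in
/-- Per-iteration contraction of an inexact gradient step on the strongly convex, smooth
quadratic `f(h) = (1/2)⟪h, Ah⟫ − ⟪b, h⟫` minimized at `h*`: for step size `0 < ρ ≤ 1/(2L)`,
`‖h − ρg − h*‖² ≤ (1 − ρλ/2)‖h − h*‖² + (2ρ/λ + 2ρ²)‖g − (Ah − b)‖²`. -/
theorem stmt14 (n : ℕ) (hn : 1 ≤ n) (A : Matrix (Fin n) (Fin n) ℝ) (hA : A.IsSymm)
    (lam L : ℝ) (hlam : 0 < lam) (hLpos : 0 < L)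
    (hlow : ∀ x : EuclideanSpace ℝ (Fin n),
      lam * ‖x‖ ^ 2 ≤ ⟪x, (WithLp.equiv 2 (Fin n → ℝ)).symm (A.mulVec x)⟫_ℝ)
    (hhigh : ∀ x : EuclideanSpace ℝ (Fin n),
      ⟪x, (WithLp.equiv 2 (Fin n → ℝ)).symm (A.mulVec x)⟫_ℝ ≤ L * ‖x‖ ^ 2)
    (b hstar : EuclideanSpace ℝ (Fin n))
    (hsol : (WithLp.equiv 2 (Fin n → ℝ)).symm (A.mulVec hstar) = b)
    (ρ : ℝ) (hρ0 : 0 < ρ) (hρ : ρ ≤ 1 / (2 * L)) :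
    ∀ h g : EuclideanSpace ℝ (Fin n),
      ‖h - ρ • g - hstar‖ ^ 2
        ≤ (1 - ρ * lam / 2) * ‖h - hstar‖ ^ 2 +
          (2 * ρ / lam + 2 * ρ ^ 2) *
            ‖g - ((WithLp.equiv 2 (Fin n → ℝ)).symm (A.mulVec h) - b)‖ ^ 2 := by
  intro h g
  set T : EuclideanSpace ℝ (Fin n) →ₗ[ℝ] EuclideanSpace ℝ (Fin n) := Matrix.toEuclideanLin A with hT
  have hTx : ∀ x : EuclideanSpace ℝ (Fin n),
      T x = (WithLp.equiv 2 (Fin n → ℝ)).symm (A.mulVec x) := fun x => rfl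
  have hsym : ∀ x y : EuclideanSpace ℝ (Fin n), ⟪T x, y⟫_ℝ = ⟪x, T y⟫_ℝ :=
    Matrix.isHermitian_iff_isSymmetric.mp hA
  simp only [← hTx] at hlow hhigh hsol ⊢
  set e : EuclideanSpace ℝ (Fin n) := h - hstar with he
  set d : EuclideanSpace ℝ (Fin n) := g - (T h - b) with hd
  have hTe : T e = T h - b := by rw [he, map_sub, hsol]
  have hstep : h - ρ • g - hstar = (e - ρ • T e) - ρ • d := by
    rw [hd, hTe]; module
  have hQlow : lam * ‖e‖ ^ 2 ≤ ⟪e, T e⟫_ℝ := hlow e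
  have hQ0 : (0:ℝ) ≤ ⟪e, T e⟫_ℝ := le_trans (by positivity) hQlow
  -- Cauchy-Schwarz for the PSD bilinear form
  have hCS : ∀ x y : EuclideanSpace ℝ (Fin n),
      ⟪x, T y⟫_ℝ ^ 2 ≤ ⟪x, T x⟫_ℝ * ⟪y, T y⟫_ℝ := by
    intro x y
    have hyx : ⟪y, T x⟫_ℝ = ⟪x, T y⟫_ℝ := by
      rw [← hsym y x]; exact real_inner_comm _ _
    have hquad : ∀ t : ℝ, 0 ≤ ⟪y, T y⟫_ℝ * (t * t) + (2 * ⟪x, T y⟫_ℝ) * t + ⟪x, T x⟫_ℝ := by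
      intro t
      have h0 : (0:ℝ) ≤ ⟪x + t • y, T (x + t • y)⟫_ℝ :=
        le_trans (by positivity) (hlow _)
      have hexp : ⟪x + t • y, T (x + t • y)⟫_ℝ
          = ⟪y, T y⟫_ℝ * (t * t) + (2 * ⟪x, T y⟫_ℝ) * t + ⟪x, T x⟫_ℝ := by
        rw [map_add, map_smul, inner_add_left, inner_add_right, inner_add_right,
          real_inner_smul_left, real_inner_smul_left, real_inner_smul_right,
          real_inner_smul_right, hyx]
        ring
      linarith [hexp ▸ h0]
    have hdisc := discrim_le_zero hquad
    rw [discrim] at hdisc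
    nlinarith [hdisc]
  -- operator bound : ‖T e‖² ≤ L ⟪e, T e⟫
  have hN : ‖T e‖ ^ 2 ≤ L * ⟪e, T e⟫_ℝ := by
    have h1 : ⟪e, T (T e)⟫_ℝ = ‖T e‖ ^ 2 := by
      rw [← hsym e (T e), real_inner_self_eq_norm_sq]
    have h2 := hCS e (T e)
    have h3 := hhigh (T e)
    rw [h1] at h2
    rcases le_or_gt (‖T e‖ ^ 2) 0 with h4 | h4
    · nlinarith
    · nlinarith
  have hρL : ρ * L ≤ 1 / 2 := by
    have h2L : (0:ℝ) < 2 * L := by positivity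
    have := (le_div_iff₀ h2L).mp hρ
    nlinarith
  -- exact gradient step contraction
  have hU : ‖e - ρ • T e‖ ^ 2 = ‖e‖ ^ 2 - 2 * ρ * ⟪e, T e⟫_ℝ + ρ ^ 2 * ‖T e‖ ^ 2 := by
    rw [norm_sub_sq_real, real_inner_smul_right, norm_smul, Real.norm_eq_abs, mul_pow, sq_abs]
    ring
  have hUb : ‖e - ρ • T e‖ ^ 2 ≤ (1 - 3 * ρ * lam / 2) * ‖e‖ ^ 2 := by
    rw [hU]
    have q1 : ρ ^ 2 * ‖T e‖ ^ 2 ≤ ρ ^ 2 * (L * ⟪e, T e⟫_ℝ) :=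
      mul_le_mul_of_nonneg_left hN (sq_nonneg ρ)
    have q2 : ρ * L * (ρ * ⟪e, T e⟫_ℝ) ≤ 1 / 2 * (ρ * ⟪e, T e⟫_ℝ) :=
      mul_le_mul_of_nonneg_right hρL (by positivity)
    have q3 : ρ * (lam * ‖e‖ ^ 2) ≤ ρ * ⟪e, T e⟫_ℝ :=
      mul_le_mul_of_nonneg_left hQlow hρ0.le
    nlinarith [q1, q2, q3]
  rw [hstep]
  have hexp2 : ‖(e - ρ • T e) - ρ • d‖ ^ 2
      = ‖e - ρ • T e‖ ^ 2 - 2 * ρ * ⟪e - ρ • T e, d⟫_ℝ + ρ ^ 2 * ‖d‖ ^ 2 := by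
    rw [norm_sub_sq_real, real_inner_smul_right, norm_smul, Real.norm_eq_abs, mul_pow, sq_abs]
    ring
  rw [hexp2]
  set a := ‖e - ρ • T e‖ with ha
  set bb := ‖d‖ with hbb
  set c := ⟪e - ρ • T e, d⟫_ℝ with hc
  have hcs2 : -c ≤ a * bb := by
    have := abs_real_inner_le_norm (e - ρ • T e) d
    rw [← hc, ← ha, ← hbb] at this
    cases abs_cases c with
    | inl h' => nlinarith [norm_nonneg (e - ρ • T e), norm_nonneg d]
    | inr h' => linarith
  have hyoung : 2 * (a * bb) ≤ (lam / 2) * a ^ 2 + (2 / lam) * bb ^ 2 := by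
    have key : (lam / 2) * a ^ 2 + (2 / lam) * bb ^ 2 - 2 * (a * bb)
        = (lam * a - 2 * bb) ^ 2 / (2 * lam) := by
      field_simp; ring
    nlinarith [div_nonneg (sq_nonneg (lam * a - 2 * bb)) (by positivity : (0:ℝ) ≤ 2 * lam)]
  have hE0 : (0:ℝ) ≤ ‖e‖ ^ 2 := by positivity
  have p1 : 2 * ρ * (-c) ≤ 2 * ρ * (a * bb) :=
    mul_le_mul_of_nonneg_left hcs2 (by positivity)
  set w : ℝ := 2 * ρ / lam with hw
  have p2 : ρ * (2 * (a * bb)) ≤ ρ * (lam / 2) * a ^ 2 + w * bb ^ 2 := by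
    calc ρ * (2 * (a * bb)) ≤ ρ * ((lam / 2) * a ^ 2 + (2 / lam) * bb ^ 2) :=
          mul_le_mul_of_nonneg_left hyoung hρ0.le
      _ = ρ * (lam / 2) * a ^ 2 + w * bb ^ 2 := by rw [hw]; ring
  have p3 : (1 + ρ * lam / 2) * a ^ 2 ≤ (1 + ρ * lam / 2) * ((1 - 3 * ρ * lam / 2) * ‖e‖ ^ 2) :=
    mul_le_mul_of_nonneg_left hUb (by positivity)
  have p4 : (0:ℝ) ≤ ρ * lam * ‖e‖ ^ 2 := by positivity
  have p5 : (0:ℝ) ≤ (ρ * lam) ^ 2 * ‖e‖ ^ 2 := by positivity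
  have p6 : (0:ℝ) ≤ ρ ^ 2 * bb ^ 2 := by positivity
  linarith [p1, p2, p3, p4, p5, p6]
end
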